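/- For every n ≥ 0 and every standard Young tableau T of shape θ^(n), the word ψ(T) = p_1 p_2 … p_{2n+2} defined by: p_i = E if the entry i+2 of T lies in the arm, p_i = N if i+2 lies in the leg, p_i = S if i+2 lies in the heart and 2 lies in the arm, and p_i = W if i+2 lies in the heart and 2 lies in the leg, is a lattice path in P_n (i.e., ψ is well-defined as a map SYT(θ^(n)) → P_n). -/

import Mathlib

/-- The four unit steps of a lattice path. -/
inductive Step : Type
  | N | S | E | W
  deriving DecidableEq

/-- The vector in `ℤ × ℤ` corresponding to a step. -/
def stepVec : Step → ℤ × ℤ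
  | Step.N => (0, 1)
  | Step.S => (0, -1)
  | Step.E => (1, 0)
  | Step.W => (-1, 0)

/-- The endpoint of the lattice path described by the word `w`, starting at the origin. -/
def endpt (w : List Step) : ℤ × ℤ := (w.map stepVec).sum

/-- `w` is a lattice path in `𝒫ₙ`: it has length `2n+2`, stays weakly in the first
quadrant, and ends at `(n, n)`. -/
def IsPath (n : ℕ) (w : List Step) : Prop :=
  w.length = 2 * n + 2 ∧
  (∀ k : ℕ, 0 ≤ (endpt (w.take k)).1 ∧ 0 ≤ (endpt (w.take k)).2) ∧
  endpt w = ((n : ℤ), (n : ℤ))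

/-- The cells of the Young diagram of `θ⁽ⁿ⁾ = (n+2, 2, 1ⁿ)`, in (row, column) matrix
coordinates, 0-indexed, English orientation. -/
def cells (n : ℕ) : Set (ℕ × ℕ) :=
  {c | (c.1 = 0 ∧ c.2 ≤ n + 1) ∨ c = (1, 1) ∨ (c.2 = 0 ∧ 1 ≤ c.1 ∧ c.1 ≤ n + 1)}

/-- `T` is a standard Young tableau of shape `θ⁽ⁿ⁾`: it is a bijective filling of the
cells with `1, …, 2n+4` (and `0` elsewhere), strictly increasing along rows and
down columns. -/
def IsSYT (n : ℕ) (T : ℕ × ℕ → ℕ) : Prop :=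
  (∀ c, c ∉ cells n → T c = 0) ∧
  Set.BijOn T (cells n) (Set.Icc 1 (2 * n + 4)) ∧
  (∀ c ∈ cells n, ∀ d ∈ cells n, c.1 = d.1 → c.2 < d.2 → T c < T d) ∧
  (∀ c ∈ cells n, ∀ d ∈ cells n, c.2 = d.2 → c.1 < d.1 → T c < T d)

/-- The value `m` appears in the arm (first row) of `T`. -/
def InArm (n : ℕ) (T : ℕ × ℕ → ℕ) (m : ℕ) : Prop := ∃ j ≤ n + 1, T (0, j) = m

/-- The value `m` appears in the leg (first column) of `T`. -/
def InLeg (n : ℕ) (T : ℕ × ℕ → ℕ) (m : ℕ) : Prop := ∃ i ≤ n + 1, T (i, 0) = m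

/-- The value `m` appears in the heart (the cell `(1,1)`) of `T`. -/
def InHeart (T : ℕ × ℕ → ℕ) (m : ℕ) : Prop := T (1, 1) = m

open Classical in
/-- The map ψ: the `i`-th letter (1-based, `i = k+1` for `k : Fin (2n+2)`) is determined by
the position of the entry `i+2` of `T`, and, if `i+2` is in the heart, by the position of `2`. -/
noncomputable def psi (n : ℕ) (T : ℕ × ℕ → ℕ) : List Step :=
  List.ofFn (fun k : Fin (2 * n + 2) =>
    if InArm n T (k.val + 3) then Step.E
    else if InLeg n T (k.val + 3) then Step.N
    else if InHeart T (k.val + 3) ∧ InArm n T 2 then Step.S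
    else Step.W)

/-!
The entry `1` of `T` sits in the corner and `2` sits either at `(0,1)` or at `(1,0)`. Since
`θ⁽ⁿ⁾` is self-conjugate, transposing `T` exchanges the two cases and turns `ψ(T)` into its
mirror image (`E ↔ N`, `S ↔ W`), so we may assume `T (0,1) = 2`. Then `ψ(T)` has `n` letters
`E` (the arm minus its first two cells), `n + 1` letters `N` (the leg), one `S` (the heart)
and no `W`, so it ends at `(n, n)`. Only the `S` can push a prefix out of the quadrant, and it
cannot: `T (1,0) < T (1,1)`, so an `N` precedes it.
-/

open Finset

namespace Step

def swap : Step → Step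
  | N => E
  | S => W
  | E => N
  | W => S

lemma stepVec_swap (s : Step) : stepVec s.swap = (stepVec s).swap := by
  cases s <;> rfl

end Step

lemma endpt_cons (s : Step) (w : List Step) : endpt (s :: w) = stepVec s + endpt w := by
  simp [endpt]

lemma endpt_map_swap (w : List Step) : endpt (w.map Step.swap) = (endpt w).swap := by
  induction w with
  | nil => rfl
  | cons s w ih => simp [endpt_cons, ih, Step.stepVec_swap]

lemma endpt_eq_count (w : List Step) :
    endpt w = ((w.count .E : ℤ) - w.count .W, (w.count .N : ℤ) - w.count .S) := by
  induction w with
  | nil => rfl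
  | cons s w ih =>
    cases s <;> simp [endpt_cons, ih, stepVec] <;> ring

lemma length_eq_count_add (w : List Step) :
    w.length = w.count .E + w.count .N + w.count .S + w.count .W := by
  induction w with
  | nil => rfl
  | cons s w ih => cases s <;> simp [ih] <;> omega

lemma IsPath.of_map_swap {n : ℕ} {w : List Step} (h : IsPath n (w.map Step.swap)) :
    IsPath n w := by
  obtain ⟨hlen, hquad, hend⟩ := h
  refine ⟨by simpa using hlen, fun k => ?_, ?_⟩
  · simpa [← List.map_take, endpt_map_swap, and_comm] using hquad k
  · rw [endpt_map_swap] at hend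
    simpa using congrArg Prod.swap hend

namespace List

lemma count_take_le_count_take {α : Type*} [DecidableEq α] {w : List α} {a b : α}
    (hb : w.count b ≤ 1) (hba : ∀ i : ℕ, w[i]? = some b → ∃ j < i, w[j]? = some a) (k : ℕ) :
    (w.take k).count b ≤ (w.take k).count a := by
  by_cases hbk : b ∈ w.take k
  · obtain ⟨i, hi⟩ := mem_iff_getElem?.1 hbk
    rw [getElem?_take] at hi
    split_ifs at hi with hik
    obtain ⟨j, hji, hj⟩ := hba i hi
    have hak : a ∈ w.take k :=
      mem_iff_getElem?.2 ⟨j, by rw [getElem?_take, if_pos (by omega), hj]⟩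
    have := count_pos_iff.2 hak
    have := (take_sublist k w).count_le b
    omega
  · simp [count_eq_zero.2 hbk]

lemma count_ofFn_eq_card {α : Type*} [DecidableEq α] (g : ℕ → α) (a : α) (N : ℕ) :
    (ofFn fun k : Fin N => g k).count a = #{k ∈ Finset.range N | g k = a} := by
  induction N with
  | zero => simp
  | succ N ih =>
    rw [ofFn_succ_last, count_append, range_add_one, filter_insert]
    simp only [Fin.val_castSucc, Fin.val_last, ih]
    split_ifs with h <;> simp [h]

end List

lemma isPath_of_count {n : ℕ} {w : List Step} (hE : w.count .E = n) (hN : w.count .N = n + 1)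
    (hS : w.count .S = 1) (hW : w.count .W = 0)
    (hNS : ∀ i : ℕ, w[i]? = some Step.S → ∃ j < i, w[j]? = some Step.N) : IsPath n w := by
  refine ⟨by rw [length_eq_count_add]; omega, fun k => ?_, ?_⟩
  · have hWk := (w.take_sublist k).count_le .W
    have hSk := List.count_take_le_count_take hS.le hNS k
    rw [endpt_eq_count]
    omega
  · rw [endpt_eq_count, hE, hN, hS, hW]
    simp

section Cells

variable {n : ℕ}

lemma arm_mem_cells {j : ℕ} (hj : j ≤ n + 1) : (0, j) ∈ cells n := Or.inl ⟨rfl, hj⟩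

lemma leg_mem_cells {i : ℕ} (hi : i ≤ n + 1) : (i, 0) ∈ cells n := by
  rcases Nat.eq_zero_or_pos i with rfl | hi0
  · exact arm_mem_cells (Nat.zero_le _)
  · exact Or.inr (Or.inr ⟨rfl, hi0, hi⟩)

lemma heart_mem_cells : (1, 1) ∈ cells n := Or.inr (Or.inl rfl)

lemma swap_mem_cells {c : ℕ × ℕ} : c.swap ∈ cells n ↔ c ∈ cells n := by
  obtain ⟨a, b⟩ := c
  simp only [cells, Set.mem_ofPred_eq, Prod.swap_prod_mk, Prod.mk.injEq]
  omega

end Cells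

namespace IsSYT

variable {n : ℕ} {T : ℕ × ℕ → ℕ}

lemma transpose (hT : IsSYT n T) : IsSYT n (T ∘ Prod.swap) := by
  obtain ⟨hzero, hbij, hrow, hcol⟩ := hT
  have hswap : Set.BijOn Prod.swap (cells n) (cells n) :=
    ⟨fun _ hc => swap_mem_cells.2 hc, Prod.swap_injective.injOn,
      fun c hc => ⟨c.swap, swap_mem_cells.2 hc, c.swap_swap⟩⟩
  refine ⟨fun c hc => hzero _ (mt swap_mem_cells.1 hc), hbij.comp hswap, ?_, ?_⟩
  · exact fun c hc d hd => hcol _ (swap_mem_cells.2 hc) _ (swap_mem_cells.2 hd)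
  · exact fun c hc d hd => hrow _ (swap_mem_cells.2 hc) _ (swap_mem_cells.2 hd)

lemma mem_Icc (hT : IsSYT n T) {c : ℕ × ℕ} (hc : c ∈ cells n) : T c ∈ Set.Icc 1 (2 * n + 4) :=
  hT.2.1.mapsTo hc

lemma eq_of_apply_eq (hT : IsSYT n T) {c d : ℕ × ℕ} (hc : c ∈ cells n) (hd : d ∈ cells n)
    (h : T c = T d) : c = d :=
  hT.2.1.injOn hc hd h

lemma arm_lt_arm (hT : IsSYT n T) {j j' : ℕ} (hj' : j' ≤ n + 1) (h : j < j') :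
    T (0, j) < T (0, j') :=
  hT.2.2.1 _ (arm_mem_cells (by omega)) _ (arm_mem_cells hj') rfl h

lemma leg_lt_leg (hT : IsSYT n T) {i i' : ℕ} (hi' : i' ≤ n + 1) (h : i < i') :
    T (i, 0) < T (i', 0) :=
  hT.2.2.2 _ (leg_mem_cells (by omega)) _ (leg_mem_cells hi') rfl h

lemma arm_one_lt_heart (hT : IsSYT n T) : T (0, 1) < T (1, 1) :=
  hT.2.2.2 _ (arm_mem_cells (by omega)) _ heart_mem_cells rfl one_pos

lemma leg_one_lt_heart (hT : IsSYT n T) : T (1, 0) < T (1, 1) :=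
  hT.2.2.1 _ (leg_mem_cells (by omega)) _ heart_mem_cells rfl one_pos

lemma inArm_or_inLeg_or_inHeart (hT : IsSYT n T) {v : ℕ} (hv : v ∈ Set.Icc 1 (2 * n + 4)) :
    InArm n T v ∨ InLeg n T v ∨ InHeart T v := by
  obtain ⟨⟨a, b⟩, hc, rfl⟩ := hT.2.1.surjOn hv
  rcases hc with ⟨rfl, hb⟩ | hab | ⟨rfl, -, ha⟩
  · exact Or.inl ⟨b, hb, rfl⟩
  · exact Or.inr (Or.inr (by rw [hab]; rfl))
  · exact Or.inr (Or.inl ⟨a, ha, rfl⟩)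

lemma apply_zero_zero (hT : IsSYT n T) : T (0, 0) = 1 := by
  have h1 := (hT.mem_Icc (arm_mem_cells (Nat.zero_le _))).1
  rcases hT.inArm_or_inLeg_or_inHeart (v := 1) ⟨le_rfl, by omega⟩ with
    ⟨j, hj, h⟩ | ⟨i, hi, h⟩ | h
  · rcases Nat.eq_zero_or_pos j with rfl | hj0
    · exact h
    · have := hT.arm_lt_arm hj hj0; omega
  · rcases Nat.eq_zero_or_pos i with rfl | hi0
    · exact h
    · have := hT.leg_lt_leg hi hi0; omega
  · have := hT.arm_lt_arm (j := 0) (j' := 1) (by omega) one_pos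
    have := hT.arm_one_lt_heart
    unfold InHeart at h
    omega

lemma eq_one_of_inArm_of_inLeg (hT : IsSYT n T) {v : ℕ} (hA : InArm n T v) (hL : InLeg n T v) :
    v = 1 := by
  obtain ⟨j, hj, rfl⟩ := hA
  obtain ⟨i, hi, h⟩ := hL
  obtain ⟨rfl, rfl⟩ := Prod.mk.inj (hT.eq_of_apply_eq (leg_mem_cells hi) (arm_mem_cells hj) h)
  exact hT.apply_zero_zero

lemma arm_ne_heart (hT : IsSYT n T) {j : ℕ} (hj : j ≤ n + 1) : T (0, j) ≠ T (1, 1) := fun h =>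
  absurd (hT.eq_of_apply_eq (arm_mem_cells hj) heart_mem_cells h) (by simp)

lemma leg_ne_heart (hT : IsSYT n T) {i : ℕ} (hi : i ≤ n + 1) : T (i, 0) ≠ T (1, 1) := fun h =>
  absurd (hT.eq_of_apply_eq (leg_mem_cells hi) heart_mem_cells h) (by simp)

lemma two_mem (hT : IsSYT n T) : T (0, 1) = 2 ∨ T (1, 0) = 2 := by
  have h00 := hT.apply_zero_zero
  have h01 := hT.arm_lt_arm (j := 0) (j' := 1) (by omega) one_pos
  have h10 := hT.leg_lt_leg (i := 0) (i' := 1) (by omega) one_pos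
  rcases hT.inArm_or_inLeg_or_inHeart (v := 2) ⟨by omega, by omega⟩ with
    ⟨j, hj, h⟩ | ⟨i, hi, h⟩ | h
  · rcases lt_trichotomy j 1 with hj1 | rfl | hj1
    · obtain rfl : j = 0 := by omega
      omega
    · exact Or.inl h
    · have := hT.arm_lt_arm hj hj1; omega
  · rcases lt_trichotomy i 1 with hi1 | rfl | hi1
    · obtain rfl : i = 0 := by omega
      omega
    · exact Or.inr h
    · have := hT.leg_lt_leg hi hi1; omega
  · have := hT.arm_one_lt_heart
    unfold InHeart at h
    omega

lemma injOn_arm (hT : IsSYT n T) : Set.InjOn (fun j => T (0, j)) (Set.Iic (n + 1)) :=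
  fun _ hj _ hj' h => (Prod.mk.inj (hT.eq_of_apply_eq (arm_mem_cells hj) (arm_mem_cells hj') h)).2

lemma injOn_leg (hT : IsSYT n T) : Set.InjOn (fun i => T (i, 0)) (Set.Iic (n + 1)) :=
  fun _ hi _ hi' h => (Prod.mk.inj (hT.eq_of_apply_eq (leg_mem_cells hi) (leg_mem_cells hi') h)).1

lemma three_le_leg (hT : IsSYT n T) (h2 : T (0, 1) = 2) {i : ℕ} (hi : 1 ≤ i)
    (hi' : i ≤ n + 1) : 3 ≤ T (i, 0) := by
  have h1 := hT.leg_lt_leg hi' hi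
  have hne : T (i, 0) ≠ T (0, 1) := fun h =>
    absurd (hT.eq_of_apply_eq (leg_mem_cells hi') (arm_mem_cells (by omega)) h) (by simp)
  rw [hT.apply_zero_zero] at h1
  omega

end IsSYT

open Classical in
noncomputable def psiLetter (n : ℕ) (T : ℕ × ℕ → ℕ) (v : ℕ) : Step :=
  if InArm n T v then Step.E
  else if InLeg n T v then Step.N
  else if InHeart T v ∧ InArm n T 2 then Step.S
  else Step.W

section Psi

variable {n : ℕ} {T : ℕ × ℕ → ℕ}

lemma psi_eq_ofFn :
    psi n T = List.ofFn fun k : Fin (2 * n + 2) => psiLetter n T (k + 3) :=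
  rfl

lemma getElem?_psi (k : ℕ) :
    (psi n T)[k]? = if k < 2 * n + 2 then some (psiLetter n T (k + 3)) else none := by
  rw [psi_eq_ofFn, List.getElem?_ofFn]
  simp

lemma card_le_count_psi {ι : Type*} {a : Step} (s : Finset ι) (v : ι → ℕ) (hv : Set.InjOn v s)
    (h : ∀ i ∈ s, v i ∈ Set.Icc 3 (2 * n + 4) ∧ psiLetter n T (v i) = a) :
    #s ≤ (psi n T).count a := by
  rw [psi_eq_ofFn, List.count_ofFn_eq_card (fun k => psiLetter n T (k + 3))]
  calc #s = #(s.image fun i => v i - 3) := by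
        refine (card_image_of_injOn fun i hi j hj hij => hv hi hj ?_).symm
        have := (h i hi).1.1; have := (h j hj).1.1
        omega
    _ ≤ _ := by
        refine card_le_card fun k hk => ?_
        obtain ⟨i, hi, rfl⟩ := mem_image.1 hk
        obtain ⟨⟨h3, h4⟩, ha⟩ := h i hi
        simp only [mem_filter, mem_range, Nat.sub_add_cancel h3, ha, and_true]
        omega

lemma psiLetter_of_inArm {v : ℕ} (h : InArm n T v) : psiLetter n T v = Step.E := if_pos h

lemma psiLetter_of_inLeg (hT : IsSYT n T) {v : ℕ} (hv : v ≠ 1) (h : InLeg n T v) :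
    psiLetter n T v = Step.N := by
  rw [psiLetter, if_neg fun hA => hv (hT.eq_one_of_inArm_of_inLeg hA h), if_pos h]

lemma psiLetter_heart (hT : IsSYT n T) (h2 : InArm n T 2) :
    psiLetter n T (T (1, 1)) = Step.S := by
  have hA : ¬ InArm n T (T (1, 1)) := fun ⟨j, hj, h⟩ => hT.arm_ne_heart hj h
  have hL : ¬ InLeg n T (T (1, 1)) := fun ⟨i, hi, h⟩ => hT.leg_ne_heart hi h
  rw [psiLetter, if_neg hA, if_neg hL, if_pos ⟨rfl, h2⟩]

lemma inHeart_of_psiLetter_eq_S {v : ℕ} (h : psiLetter n T v = Step.S) : InHeart T v := by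
  unfold psiLetter at h
  split_ifs at h with _ _ hS
  exact hS.1

lemma psiLetter_ne_W (hT : IsSYT n T) (h2 : InArm n T 2) {v : ℕ}
    (hv : v ∈ Set.Icc 1 (2 * n + 4)) : psiLetter n T v ≠ Step.W := by
  unfold psiLetter
  rcases hT.inArm_or_inLeg_or_inHeart hv with h | h | h <;> split_ifs <;> simp_all

lemma inArm_transpose {v : ℕ} : InArm n (T ∘ Prod.swap) v ↔ InLeg n T v := ⟨id, id⟩

lemma inLeg_transpose {v : ℕ} : InLeg n (T ∘ Prod.swap) v ↔ InArm n T v := ⟨id, id⟩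

lemma inHeart_transpose {v : ℕ} : InHeart (T ∘ Prod.swap) v ↔ InHeart T v := ⟨id, id⟩

lemma psiLetter_transpose (hT : IsSYT n T) {v : ℕ} (hv : v ∈ Set.Icc 2 (2 * n + 4)) :
    psiLetter n (T ∘ Prod.swap) v = (psiLetter n T v).swap := by
  have hAL : ¬ (InArm n T v ∧ InLeg n T v) := fun ⟨hA, hL⟩ =>
    absurd (hT.eq_one_of_inArm_of_inLeg hA hL) (by have := hv.1; omega)
  have h2 : InArm n T 2 ↔ ¬ InLeg n T 2 := by
    rcases hT.two_mem with h | h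
    · exact ⟨fun _ hL => absurd (hT.eq_one_of_inArm_of_inLeg ⟨1, by omega, h⟩ hL) (by omega),
        fun _ => ⟨1, by omega, h⟩⟩
    · exact ⟨fun hA => absurd (hT.eq_one_of_inArm_of_inLeg hA ⟨1, by omega, h⟩) (by omega),
        fun hL => absurd ⟨1, by omega, h⟩ hL⟩
  have hcell := hT.inArm_or_inLeg_or_inHeart (v := v) ⟨by have := hv.1; omega, hv.2⟩
  classical
  simp only [psiLetter, inArm_transpose, inLeg_transpose, inHeart_transpose]
  split_ifs <;> simp_all [Step.swap]

lemma psi_transpose (hT : IsSYT n T) : psi n (T ∘ Prod.swap) = (psi n T).map Step.swap := by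
  rw [psi_eq_ofFn, psi_eq_ofFn, List.map_ofFn]
  congr 1
  funext k
  exact psiLetter_transpose hT ⟨by omega, by omega⟩

lemma count_psi_W_eq_zero (hT : IsSYT n T) (h2 : InArm n T 2) : (psi n T).count Step.W = 0 := by
  refine List.count_eq_zero.2 fun hmem => ?_
  obtain ⟨k, hk⟩ := List.mem_iff_getElem?.1 hmem
  rw [getElem?_psi] at hk
  split_ifs at hk with hk'
  exact psiLetter_ne_W hT h2 ⟨by omega, by omega⟩ (Option.some_inj.1 hk)

lemma exists_psi_N_before_S (hT : IsSYT n T) (h2 : T (0, 1) = 2) (i : ℕ)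
    (hi : (psi n T)[i]? = some Step.S) : ∃ j < i, (psi n T)[j]? = some Step.N := by
  rw [getElem?_psi] at hi
  split_ifs at hi with hi'
  have hSi : T (1, 1) = i + 3 := inHeart_of_psiLetter_eq_S (Option.some_inj.1 hi)
  have h10 := hT.leg_one_lt_heart
  have h3 := hT.three_le_leg h2 le_rfl (by omega)
  refine ⟨T (1, 0) - 3, by omega, ?_⟩
  rw [getElem?_psi, if_pos (by omega), Nat.sub_add_cancel h3,
    psiLetter_of_inLeg hT (by omega) ⟨1, by omega, rfl⟩]

lemma isPath_psi_of_two_in_arm (hT : IsSYT n T) (h2 : T (0, 1) = 2) : IsPath n (psi n T) := by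
  have hA2 : InArm n T 2 := ⟨1, by omega, h2⟩
  have hbound := fun {c} (hc : c ∈ cells n) => (hT.mem_Icc hc).2
  have hE : n ≤ (psi n T).count Step.E := by
    simpa using card_le_count_psi (Icc 2 (n + 1)) (fun j => T (0, j))
      (hT.injOn_arm.mono fun j hj => (mem_Icc.1 hj).2) fun j hj => by
        obtain ⟨hj, hj'⟩ := mem_Icc.1 hj
        exact ⟨⟨by have := hT.arm_lt_arm hj' hj; omega, hbound (arm_mem_cells hj')⟩,
          psiLetter_of_inArm ⟨j, hj', rfl⟩⟩
  have hN : n + 1 ≤ (psi n T).count Step.N := by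
    simpa using card_le_count_psi (Icc 1 (n + 1)) (fun i => T (i, 0))
      (hT.injOn_leg.mono fun i hi => (mem_Icc.1 hi).2) fun i hi => by
        obtain ⟨hi, hi'⟩ := mem_Icc.1 hi
        have h3 := hT.three_le_leg h2 hi hi'
        exact ⟨⟨h3, hbound (leg_mem_cells hi')⟩, psiLetter_of_inLeg hT (by omega) ⟨i, hi', rfl⟩⟩
  have hS : 1 ≤ (psi n T).count Step.S := by
    have := hT.arm_one_lt_heart
    simpa using card_le_count_psi {()} (fun _ => T (1, 1)) (by simp) fun _ _ =>
      ⟨⟨by omega, hbound heart_mem_cells⟩, psiLetter_heart hT hA2⟩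
  have hW := count_psi_W_eq_zero hT hA2
  have hlen : (psi n T).length = 2 * n + 2 := List.length_ofFn
  rw [length_eq_count_add] at hlen
  exact isPath_of_count (by omega) (by omega) (by omega) hW (exists_psi_N_before_S hT h2)

end Psi

/-- For every standard Young tableau `T` of shape `θ⁽ⁿ⁾`, the word
`ψ(T)` is a lattice path in `𝒫ₙ`; i.e., `ψ` is well-defined as a map `SYT(θ⁽ⁿ⁾) → 𝒫ₙ`. -/
theorem psi_wellDefined (n : ℕ) (T : ℕ × ℕ → ℕ) (hT : IsSYT n T) :
    IsPath n (psi n T) := by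
  rcases hT.two_mem with h2 | h2
  · exact isPath_psi_of_two_in_arm hT h2
  · apply IsPath.of_map_swap
    rw [← psi_transpose hT]
    exact isPath_psi_of_two_in_arm hT.transpose h2
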